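/- Let f_1, …, f_K be linearly independent matrix-valued signals in L²(a,b; ℂ^{N×N}). Define recursively g_1 := ⟨f_1,f_1⟩^{-1/2} f_1 and, for k = 2, …, K, ĝ_k := f_k − ∑_{l=1}^{k−1} ⟨f_k, g_l⟩ g_l and g_k := ⟨ĝ_k, ĝ_k⟩^{-1/2} ĝ_k. Then each ĝ_k (k = 2, …, K) is nondegenerate, so the recursion is well-defined, and g_1, …, g_K form an orthonormal set: ⟨g_k, g_l⟩ = δ(k−l)·I_N for all 1 ≤ k, l ≤ K. -/

import Mathlib

/-!
Induction on `k` shows `ĝ_k ∈ f_k + span{f_j : j < k}`, the span taken over the matrix ring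
acting on the left. So `ĝ_k = ∑_j G_j f_j` with `G_k = I`, and linear independence forces
`⟨ĝ_k, ĝ_k⟩` to have trivial kernel. With `S` the Hermitian square root of `⟨ĝ_k, ĝ_k⟩` we
get `⟨g_k, g_k⟩ = S⁻¹ S² S⁻¹ = I`. Finally, for `i < k`, by induction on `k` only the term
`l = i` survives in `⟨ĝ_k, g_i⟩ = ⟨f_k, g_i⟩ - ∑_{l<k} ⟨f_k, g_l⟩ ⟨g_l, g_i⟩`, which is then `0`.
-/

open MeasureTheory Matrix
open scoped ComplexOrder

noncomputable section

/-- The open interval `(a, b)` in `ℝ` with extended-real endpoints. -/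
def ival (a b : EReal) : Set ℝ := {t : ℝ | a < (t : EReal) ∧ (t : EReal) < b}

/-- `f` is a matrix-valued signal in `L²(a,b; ℂ^{N×N})`: each of its `N²`
entry functions is in `L²(a,b)`. -/
def IsSignal {N : ℕ} (a b : EReal) (f : ℝ → Matrix (Fin N) (Fin N) ℂ) : Prop :=
  ∀ k l : Fin N, MemLp (fun t => f t k l) 2 (volume.restrict (ival a b))

/-- The matrix-valued inner product `⟨f,g⟩ = ∫ₐᵇ f(t) g(t)† dt`, defined entrywise. -/
def mvInner {N : ℕ} (a b : EReal) (f g : ℝ → Matrix (Fin N) (Fin N) ℂ) :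
    Matrix (Fin N) (Fin N) ℂ :=
  Matrix.of fun k l => ∫ t in ival a b, (f t * (g t)ᴴ) k l

/-- The Frobenius norm of an `N × N` complex matrix. -/
def frobNorm {N : ℕ} (A : Matrix (Fin N) (Fin N) ℂ) : ℝ :=
  Real.sqrt (∑ k, ∑ l, ‖A k l‖ ^ 2)

/-- The positive semidefinite square root of a positive semidefinite matrix
(the former Mathlib `Matrix.PosSemidef.sqrt`, restated with its old definition). -/
def psdSqrt {N : ℕ} {A : Matrix (Fin N) (Fin N) ℂ} (hA : A.PosSemidef) :
    Matrix (Fin N) (Fin N) ℂ :=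
  (hA.1.eigenvectorUnitary : Matrix (Fin N) (Fin N) ℂ) *
    diagonal ((↑) ∘ (√·) ∘ hA.1.eigenvalues) *
    (star (hA.1.eigenvectorUnitary : Matrix (Fin N) (Fin N) ℂ))

/-- Linear independence of matrix-valued signals: whenever `f := ∑ k, F k * f k`
is degenerate (i.e. `⟨f,f⟩` is not invertible), the null space of `(F k)ᴴ`
contains the null space of `⟨f,f⟩`, for every `k`. -/
def LinIndep {N K : ℕ} (a b : EReal) (f : Fin K → ℝ → Matrix (Fin N) (Fin N) ℂ) : Prop :=
  ∀ F : Fin K → Matrix (Fin N) (Fin N) ℂ,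
    ¬ IsUnit (mvInner a b (fun t => ∑ k, F k * f k t) (fun t => ∑ k, F k * f k t)) →
    ∀ (k : Fin K) (u : Fin N → ℂ),
      (mvInner a b (fun t => ∑ j, F j * f j t) (fun t => ∑ j, F j * f j t)).mulVec u = 0 →
      ((F k)ᴴ).mulVec u = 0

section PsdSqrt

variable {N : ℕ} {A : Matrix (Fin N) (Fin N) ℂ}

lemma psdSqrt_mul_self (hA : A.PosSemidef) : psdSqrt hA * psdSqrt hA = A := by
  unfold psdSqrt
  set U : Matrix (Fin N) (Fin N) ℂ := (hA.1.eigenvectorUnitary : Matrix (Fin N) (Fin N) ℂ)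
  set D : Matrix (Fin N) (Fin N) ℂ := diagonal ((↑) ∘ (√·) ∘ hA.1.eigenvalues)
  have hU : star U * U = 1 := Unitary.coe_star_mul_self _
  have hD : D * D = diagonal (RCLike.ofReal ∘ hA.1.eigenvalues) := by
    rw [diagonal_mul_diagonal]
    congr 1
    funext i
    simp only [Function.comp_apply]
    rw [← Complex.ofReal_mul, Real.mul_self_sqrt (hA.eigenvalues_nonneg i)]
    rfl
  calc U * D * star U * (U * D * star U) = U * (D * (star U * U) * D) * star U := by
        simp only [Matrix.mul_assoc]
    _ = A := by
        rw [hU, Matrix.mul_one, hD]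
        exact hA.1.spectral_theorem.symm

lemma conjTranspose_psdSqrt (hA : A.PosSemidef) : (psdSqrt hA)ᴴ = psdSqrt hA := by
  unfold psdSqrt
  rw [conjTranspose_mul, conjTranspose_mul, diagonal_conjTranspose, star_eq_conjTranspose,
    conjTranspose_conjTranspose, Matrix.mul_assoc]
  congr 2
  exact congrArg diagonal (funext fun i => Complex.conj_ofReal _)

lemma isUnit_det_psdSqrt (hA : A.PosSemidef) (hunit : IsUnit A) : IsUnit (psdSqrt hA).det := by
  have h : IsUnit (psdSqrt hA * psdSqrt hA).det := by
    rwa [psdSqrt_mul_self, ← Matrix.isUnit_iff_isUnit_det]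
  rw [Matrix.det_mul] at h
  exact isUnit_of_mul_isUnit_left h

end PsdSqrt

section Signals

variable {N : ℕ} {a b : EReal}

def signals (N : ℕ) (a b : EReal) :
    Submodule (Matrix (Fin N) (Fin N) ℂ) (ℝ → Matrix (Fin N) (Fin N) ℂ) where
  carrier := {f | IsSignal a b f}
  zero_mem' _ _ := MemLp.zero
  add_mem' hf hg k l := (hf k l).add (hg k l)
  smul_mem' A f hf k l := by
    have h : (fun t => (A * f t) k l) = fun t => ∑ m, A k m * f t m l := by
      funext t
      simp [Matrix.mul_apply]
    exact h ▸ memLp_finsetSum _ fun m _ => (hf m l).const_mul _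

lemma IsSignal.mul_left {f : ℝ → Matrix (Fin N) (Fin N) ℂ} (hf : IsSignal a b f)
    (A : Matrix (Fin N) (Fin N) ℂ) : IsSignal a b (fun t => A * f t) :=
  (signals N a b).smul_mem A hf

lemma isSignal_sum {ι : Type*} (s : Finset ι) {F : ι → ℝ → Matrix (Fin N) (Fin N) ℂ}
    (hF : ∀ j ∈ s, IsSignal a b (F j)) : IsSignal a b (fun t => ∑ j ∈ s, F j t) :=
  Finset.sum_fn s F ▸ (signals N a b).sum_mem hF

lemma isSignal_of_sub_mem_span {ι : Type*} {f : ι → ℝ → Matrix (Fin N) (Fin N) ℂ}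
    (hf : ∀ j, IsSignal a b (f j)) {k : ι} {s : Set ι} {h : ℝ → Matrix (Fin N) (Fin N) ℂ}
    (hmem : f k - h ∈ Submodule.span (Matrix (Fin N) (Fin N) ℂ) (f '' s)) : IsSignal a b h := by
  have hle : Submodule.span _ (f '' s) ≤ signals N a b :=
    Submodule.span_le.mpr (Set.image_subset_iff.mpr fun j _ => hf j)
  have hsub : f k - (f k - h) ∈ signals N a b := Submodule.sub_mem _ (hf k) (hle hmem)
  rwa [sub_sub_cancel] at hsub

lemma IsSignal.integrable_mul_conjTranspose_apply {f g : ℝ → Matrix (Fin N) (Fin N) ℂ}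
    (hf : IsSignal a b f) (hg : IsSignal a b g) (k l : Fin N) :
    Integrable (fun t => (f t * (g t)ᴴ) k l) (volume.restrict (ival a b)) := by
  have h : (fun t => (f t * (g t)ᴴ) k l)
      = fun t => ∑ m, f t k m * (starRingEnd ℂ) (g t l m) := by
    funext t
    simp [Matrix.mul_apply, Matrix.conjTranspose_apply]
  rw [h]
  refine integrable_finsetSum _ fun m _ => ?_
  have hgc : MemLp (fun t => (starRingEnd ℂ) (g t l m)) 2 (volume.restrict (ival a b)) :=
    (hg l m).of_le_mul (c := 1) (continuous_star.comp_aestronglyMeasurable (hg l m).1)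
      (by simp)
  have : ENNReal.HolderTriple 2 2 1 := ⟨by rw [inv_one]; exact ENNReal.inv_two_add_inv_two⟩
  exact memLp_one_iff_integrable.mp (hgc.smul (r := 1) (hf k m))

lemma conjTranspose_mvInner (f g : ℝ → Matrix (Fin N) (Fin N) ℂ) :
    (mvInner a b f g)ᴴ = mvInner a b g f := by
  ext k l
  change (starRingEnd ℂ) (∫ t in ival a b, (f t * (g t)ᴴ) l k)
    = ∫ t in ival a b, (g t * (f t)ᴴ) k l
  rw [← integral_conj]
  congr 1
  funext t
  simp only [Matrix.mul_apply, Matrix.conjTranspose_apply, map_sum, _root_.map_mul,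
    RCLike.star_def, Complex.conj_conj]
  exact Finset.sum_congr rfl fun m _ => mul_comm _ _

lemma mvInner_mul_left {f g : ℝ → Matrix (Fin N) (Fin N) ℂ}
    (hf : IsSignal a b f) (hg : IsSignal a b g) (A : Matrix (Fin N) (Fin N) ℂ) :
    mvInner a b (fun t => A * f t) g = A * mvInner a b f g := by
  ext k l
  have h : (fun t => (A * f t * (g t)ᴴ) k l) = fun t => ∑ m, A k m * (f t * (g t)ᴴ) m l := by
    funext t
    rw [Matrix.mul_assoc]
    simp [Matrix.mul_apply]
  change (∫ t in ival a b, (A * f t * (g t)ᴴ) k l) = _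
  rw [h, integral_finsetSum _ fun m _ =>
    (hf.integrable_mul_conjTranspose_apply hg m l).const_mul _]
  simp only [Matrix.mul_apply, mvInner, Matrix.of_apply]
  exact Finset.sum_congr rfl fun m _ => integral_const_mul _ _

lemma mvInner_mul_right {f g : ℝ → Matrix (Fin N) (Fin N) ℂ}
    (hf : IsSignal a b f) (hg : IsSignal a b g) (A : Matrix (Fin N) (Fin N) ℂ) :
    mvInner a b f (fun t => A * g t) = mvInner a b f g * Aᴴ := by
  rw [← conjTranspose_mvInner, mvInner_mul_left hg hf, conjTranspose_mul, conjTranspose_mvInner]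

lemma mvInner_sub_left {f h g : ℝ → Matrix (Fin N) (Fin N) ℂ}
    (hf : IsSignal a b f) (hh : IsSignal a b h) (hg : IsSignal a b g) :
    mvInner a b (fun t => f t - h t) g = mvInner a b f g - mvInner a b h g := by
  ext k l
  change (∫ t in ival a b, ((f t - h t) * (g t)ᴴ) k l) = _
  simp only [Matrix.sub_mul, Matrix.sub_apply]
  rw [integral_sub (hf.integrable_mul_conjTranspose_apply hg k l)
    (hh.integrable_mul_conjTranspose_apply hg k l)]
  rfl

lemma mvInner_sum_left {ι : Type*} (s : Finset ι) {F : ι → ℝ → Matrix (Fin N) (Fin N) ℂ}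
    {g : ℝ → Matrix (Fin N) (Fin N) ℂ} (hF : ∀ j ∈ s, IsSignal a b (F j))
    (hg : IsSignal a b g) :
    mvInner a b (fun t => ∑ j ∈ s, F j t) g = ∑ j ∈ s, mvInner a b (F j) g := by
  ext k l
  change (∫ t in ival a b, ((∑ j ∈ s, F j t) * (g t)ᴴ) k l) = _
  simp only [Finset.sum_mul, Matrix.sum_apply]
  rw [integral_finsetSum _ fun j hj => (hF j hj).integrable_mul_conjTranspose_apply hg k l]
  rfl

end Signals

section GramSchmidt

variable {N K : ℕ} {a b : EReal}

lemma mvInner_psdSqrt_inv_mul_self {h : ℝ → Matrix (Fin N) (Fin N) ℂ} (hh : IsSignal a b h)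
    (hpsd : (mvInner a b h h).PosSemidef) (hunit : IsUnit (mvInner a b h h)) :
    mvInner a b (fun t => (psdSqrt hpsd)⁻¹ * h t) (fun t => (psdSqrt hpsd)⁻¹ * h t) = 1 := by
  have hS := isUnit_det_psdSqrt hpsd hunit
  rw [mvInner_mul_left hh (hh.mul_left _), mvInner_mul_right hh hh, conjTranspose_nonsing_inv,
    conjTranspose_psdSqrt]
  calc _ = (psdSqrt hpsd)⁻¹ * (psdSqrt hpsd * psdSqrt hpsd * (psdSqrt hpsd)⁻¹) := by
        rw [psdSqrt_mul_self]
    _ = 1 := by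
        rw [Matrix.mul_assoc, mul_nonsing_inv _ hS, Matrix.mul_one, nonsing_inv_mul _ hS]

lemma sub_mem_span_of_gramSchmidt {f ghat g : Fin K → ℝ → Matrix (Fin N) (Fin N) ℂ}
    {C : Fin K → Fin K → Matrix (Fin N) (Fin N) ℂ} {A : Fin K → Matrix (Fin N) (Fin N) ℂ}
    (hghat : ∀ k, ghat k = fun t => f k t - ∑ l ∈ Finset.Iio k, C k l * g l t)
    (hg : ∀ k, g k = fun t => A k * ghat k t) (k : Fin K) :
    f k - ghat k ∈ Submodule.span (Matrix (Fin N) (Fin N) ℂ) (f '' Set.Iio k) := by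
  induction k using WellFoundedLT.induction with
  | _ k ih =>
    have hsum : f k - ghat k = ∑ l ∈ Finset.Iio k, C k l • g l := by
      rw [hghat k]
      funext t
      simp [Finset.sum_apply]
    rw [hsum]
    refine Submodule.sum_mem _ fun l hl => Submodule.smul_mem _ _ ?_
    rw [Finset.mem_Iio] at hl
    have hgl : g l = A l • (f l - (f l - ghat l)) := by
      rw [sub_sub_cancel, hg l]
      rfl
    rw [hgl]
    refine Submodule.smul_mem _ _ (Submodule.sub_mem _ (Submodule.subset_span ⟨l, hl, rfl⟩) ?_)
    exact Submodule.span_mono (Set.image_mono (Set.Iio_subset_Iio hl.le)) (ih l hl)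

lemma exists_eq_sum_mul_of_sub_mem_span {f : Fin K → ℝ → Matrix (Fin N) (Fin N) ℂ} {k : Fin K}
    {h : ℝ → Matrix (Fin N) (Fin N) ℂ}
    (hmem : f k - h ∈ Submodule.span (Matrix (Fin N) (Fin N) ℂ) (f '' Set.Iio k)) :
    ∃ G : Fin K → Matrix (Fin N) (Fin N) ℂ, G k = 1 ∧ h = fun t => ∑ j, G j * f j t := by
  obtain ⟨c, hc, hsum⟩ := (Finsupp.mem_span_image_iff_linearCombination _).mp hmem
  rw [Finsupp.linearCombination_apply,
    Finsupp.sum_fintype c (fun i A => A • f i) fun _ => zero_smul _ _] at hsum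
  refine ⟨Pi.single k 1 - ⇑c, ?_, ?_⟩
  · simp [(Finsupp.mem_supported' _ c).mp hc k (lt_irrefl k)]
  · funext t
    rw [← sub_sub_cancel (f k) h, ← hsum]
    simp [sub_mul, Finset.sum_apply, Pi.single_apply]

lemma LinIndep.isUnit_mvInner_self {f : Fin K → ℝ → Matrix (Fin N) (Fin N) ℂ}
    (hli : LinIndep a b f) {k : Fin K} {h : ℝ → Matrix (Fin N) (Fin N) ℂ}
    (hmem : f k - h ∈ Submodule.span (Matrix (Fin N) (Fin N) ℂ) (f '' Set.Iio k)) :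
    IsUnit (mvInner a b h h) := by
  obtain ⟨G, hGk, rfl⟩ := exists_eq_sum_mul_of_sub_mem_span hmem
  by_contra hdeg
  obtain ⟨v, hv, hker⟩ := exists_mulVec_eq_zero_iff.mpr
    (not_not.mp fun h0 => hdeg ((isUnit_iff_isUnit_det _).mpr (Ne.isUnit h0)))
  have := hli G hdeg k v hker
  rw [hGk, conjTranspose_one, one_mulVec] at this
  exact hv this

lemma mvInner_eq_zero_of_gramSchmidt {f ghat g : Fin K → ℝ → Matrix (Fin N) (Fin N) ℂ}
    {A : Fin K → Matrix (Fin N) (Fin N) ℂ} (hf : ∀ k, IsSignal a b (f k))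
    (hsig : ∀ k, IsSignal a b (ghat k))
    (hghat : ∀ k, ghat k = fun t => f k t - ∑ l ∈ Finset.Iio k, mvInner a b (f k) (g l) * g l t)
    (hg : ∀ k, g k = fun t => A k * ghat k t) (hnorm : ∀ k, mvInner a b (g k) (g k) = 1)
    {i j : Fin K} (hij : i < j) : mvInner a b (g j) (g i) = 0 := by
  have hsig_g : ∀ k, IsSignal a b (g k) := fun k => hg k ▸ (hsig k).mul_left (A k)
  induction j using WellFoundedLT.induction generalizing i with
  | _ j ih =>
    have hgram : ∀ l ∈ Finset.Iio j,
        mvInner a b (g l) (g i) = if l = i then 1 else 0 := by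
      intro l hl
      rw [Finset.mem_Iio] at hl
      rcases lt_trichotomy l i with hli | rfl | hil
      · rw [if_neg hli.ne, ← conjTranspose_mvInner, ih i hij hli, conjTranspose_zero]
      · rw [if_pos rfl, hnorm]
      · rw [if_neg hil.ne', ih l hl hil]
    have hghat_orth : mvInner a b (ghat j) (g i) = 0 := by
      rw [hghat j,
        mvInner_sub_left (hf j) (isSignal_sum _ fun l _ => (hsig_g l).mul_left _) (hsig_g i),
        mvInner_sum_left _ (fun l _ => (hsig_g l).mul_left _) (hsig_g i)]
      simp only [mvInner_mul_left (hsig_g _) (hsig_g i)]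
      rw [Finset.sum_congr rfl fun l hl => congrArg _ (hgram l hl)]
      simp [hij]
    rw [hg j, mvInner_mul_left (hsig j) (hsig_g i), hghat_orth, Matrix.mul_zero]

end GramSchmidt

theorem stmt_10_general {N K : ℕ} (a b : EReal)
    (f : Fin K → ℝ → Matrix (Fin N) (Fin N) ℂ) (hf : ∀ k, IsSignal a b (f k))
    (hli : LinIndep a b f)
    (ghat g : Fin K → ℝ → Matrix (Fin N) (Fin N) ℂ)
    (hghat : ∀ k, ghat k = fun t => f k t - ∑ l ∈ Finset.Iio k, mvInner a b (f k) (g l) * g l t)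
    (hpsd : ∀ k, (mvInner a b (ghat k) (ghat k)).PosSemidef)
    (hg : ∀ k, g k = fun t => (psdSqrt (hpsd k))⁻¹ * ghat k t) :
    (∀ k : Fin K, IsUnit (mvInner a b (ghat k) (ghat k))) ∧
      (∀ k l : Fin K, mvInner a b (g k) (g l) = if k = l then 1 else 0) := by
  have hspan : ∀ k, f k - ghat k ∈ Submodule.span (Matrix (Fin N) (Fin N) ℂ) (f '' Set.Iio k) :=
    sub_mem_span_of_gramSchmidt hghat hg
  have hunit : ∀ k, IsUnit (mvInner a b (ghat k) (ghat k)) :=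
    fun k => hli.isUnit_mvInner_self (hspan k)
  have hsig : ∀ k, IsSignal a b (ghat k) := fun k => isSignal_of_sub_mem_span hf (hspan k)
  have hnorm : ∀ k, mvInner a b (g k) (g k) = 1 := fun k => by
    rw [hg k]
    exact mvInner_psdSqrt_inv_mul_self (hsig k) (hpsd k) (hunit k)
  refine ⟨hunit, fun k l => ?_⟩
  rcases lt_trichotomy k l with hkl | rfl | hlk
  · rw [if_neg hkl.ne, ← conjTranspose_mvInner,
      mvInner_eq_zero_of_gramSchmidt hf hsig hghat hg hnorm hkl, conjTranspose_zero]
  · rw [if_pos rfl, hnorm]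
  · rw [if_neg hlk.ne', mvInner_eq_zero_of_gramSchmidt hf hsig hghat hg hnorm hlk]

/-- Gram-Schmidt orthonormalization: with
`ghat_k = f_k − ∑_{l<k} ⟨f_k,g_l⟩ g_l` (so `ghat_1 = f_1`) and
`g_k = ⟨ghat_k,ghat_k⟩^{-1/2} ghat_k`, each `ghat_k` is nondegenerate and the `g_k`
form an orthonormal set. -/
theorem stmt_10 {N K : ℕ} (a b : EReal) (hab : a < b)
    (f : Fin K → ℝ → Matrix (Fin N) (Fin N) ℂ) (hf : ∀ k, IsSignal a b (f k))
    (hli : LinIndep a b f)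
    (ghat g : Fin K → ℝ → Matrix (Fin N) (Fin N) ℂ)
    (hghat : ∀ k, ghat k = fun t => f k t - ∑ l ∈ Finset.Iio k, mvInner a b (f k) (g l) * g l t)
    (hpsd : ∀ k, (mvInner a b (ghat k) (ghat k)).PosSemidef)
    (hg : ∀ k, g k = fun t => (psdSqrt (hpsd k))⁻¹ * ghat k t) :
    (∀ k : Fin K, IsUnit (mvInner a b (ghat k) (ghat k))) ∧
      (∀ k l : Fin K, mvInner a b (g k) (g l) = if k = l then 1 else 0) :=
  stmt_10_general a b f hf hli ghat g hghat hpsd hg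

end
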